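/- Let n ≥ 2 and let H be an n×n real symmetric matrix with eigenvalues λ₁ ≤ ⋯ ≤ λₙ. Suppose there is perfect state transfer from vertex 1 to vertex 2 at time t₀, i.e. |(exp(i t₀ H))₁₂| = 1. Then for every real h with |h|·(λₙ − λ₁) < π, the fidelity at the perturbed time satisfies p(t₀ + h) ≥ 1 − h² · ((H²)₁₁ − (H₁₁)²), where (H²)₁₁ and H₁₁ denote the (1,1) entries of H² and H respectively. -/

import Mathlib

/-!
At the PST time `t₀` the unitary `U(t₀) = exp(i t₀ H)` has a unimodular entry `U(t₀)₁₂`, so its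
second column is supported on the first vertex and `|U(t₀ + h)₁₂| = |U(h)₁₁|`.  Diagonalising
`H = Qᵀ diag(λ) Q` gives `U(h)₁₁ = ∑ⱼ wⱼ e^{i h λⱼ}` with probability weights `wⱼ = Q_{j1}²`, whose
mean and second moment are `H₁₁` and `(H²)₁₁`.  Rotating by `e^{-i h H₁₁}` and using
`cos x ≥ 1 - x²/2` gives `|U(h)₁₁| ≥ 1 - h² σ² / 2` with `σ² = (H²)₁₁ - H₁₁²`; since
`1 - x ≤ max(0, 1 - x/2)²`, squaring gives the claim.
-/

open Matrix

/-- The time evolution `exp(i t H)` of a real symmetric Hamiltonian `H`,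
regarded as a complex matrix. -/
noncomputable def timeEvo {n : ℕ} (H : Matrix (Fin n) (Fin n) ℝ) (t : ℝ) :
    Matrix (Fin n) (Fin n) ℂ :=
  NormedSpace.exp (Complex.I • (t : ℂ) • H.map (fun x => (x : ℂ)))

open Complex

lemma one_sub_le_sq_of_one_sub_half_le {x a : ℝ} (hxa : 1 - x / 2 ≤ a) : 1 - x ≤ a ^ 2 := by
  rcases le_or_gt x 2 with hx | hx
  · calc 1 - x ≤ (1 - x / 2) ^ 2 := by nlinarith [sq_nonneg x]
      _ ≤ a ^ 2 := pow_le_pow_left₀ (by linarith) hxa 2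
  · nlinarith [sq_nonneg a]

section WeightedExp

variable {ι : Type*} [Fintype ι] {w : ι → ℝ}

lemma sum_mul_sub_sq_eq (hw : ∑ j, w j = 1) (μ : ι → ℝ) :
    ∑ j, w j * (μ j - ∑ k, w k * μ k) ^ 2 = ∑ j, w j * μ j ^ 2 - (∑ j, w j * μ j) ^ 2 := by
  set m := ∑ k, w k * μ k
  calc ∑ j, w j * (μ j - m) ^ 2
      = ∑ j, w j * μ j ^ 2 - 2 * m * ∑ j, w j * μ j + m ^ 2 * ∑ j, w j := by
        simp only [Finset.mul_sum, ← Finset.sum_sub_distrib, ← Finset.sum_add_distrib]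
        exact Finset.sum_congr rfl fun j _ => by ring
    _ = ∑ j, w j * μ j ^ 2 - m ^ 2 := by rw [hw]; ring

lemma sum_mul_cos_le_norm_sum_mul_exp (μ : ι → ℝ) (h m : ℝ) :
    ∑ j, w j * Real.cos (h * (μ j - m)) ≤ ‖∑ j, (w j : ℂ) * exp (h * μ j * I)‖ := by
  set z := ∑ j, (w j : ℂ) * exp (h * μ j * I)
  have hrot : exp ((-(h * m) : ℝ) * I) * z
      = ∑ j, (w j : ℂ) * exp ((h * (μ j - m) : ℝ) * I) := by
    rw [Finset.mul_sum]
    refine Finset.sum_congr rfl fun j _ => ?_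
    rw [mul_left_comm, ← exp_add]
    push_cast
    ring_nf
  calc ∑ j, w j * Real.cos (h * (μ j - m)) = (exp ((-(h * m) : ℝ) * I) * z).re := by
        simp only [hrot, re_sum, re_ofReal_mul, exp_ofReal_mul_I_re]
    _ ≤ ‖exp ((-(h * m) : ℝ) * I) * z‖ := re_le_norm _
    _ = ‖z‖ := by rw [norm_mul, norm_exp_ofReal_mul_I, one_mul]

lemma one_sub_sq_mul_variance_le_norm_sq (hw0 : ∀ j, 0 ≤ w j) (hw1 : ∑ j, w j = 1)
    (μ : ι → ℝ) (h : ℝ) :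
    1 - h ^ 2 * (∑ j, w j * μ j ^ 2 - (∑ j, w j * μ j) ^ 2)
      ≤ ‖∑ j, (w j : ℂ) * exp (h * μ j * I)‖ ^ 2 := by
  set m := ∑ j, w j * μ j
  set v := ∑ j, w j * μ j ^ 2 - m ^ 2
  have hcos : 1 - h ^ 2 * v / 2 ≤ ∑ j, w j * Real.cos (h * (μ j - m)) :=
    calc 1 - h ^ 2 * v / 2 = ∑ j, w j - h ^ 2 / 2 * ∑ j, w j * (μ j - m) ^ 2 := by
          rw [hw1, sum_mul_sub_sq_eq hw1]; ring
      _ = ∑ j, w j * (1 - (h * (μ j - m)) ^ 2 / 2) := by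
          rw [Finset.mul_sum, ← Finset.sum_sub_distrib]
          exact Finset.sum_congr rfl fun j _ => by ring
      _ ≤ ∑ j, w j * Real.cos (h * (μ j - m)) :=
          Finset.sum_le_sum fun j _ =>
            mul_le_mul_of_nonneg_left Real.one_sub_sq_div_two_le_cos (hw0 j)
  exact one_sub_le_sq_of_one_sub_half_le
    (hcos.trans (sum_mul_cos_le_norm_sum_mul_exp μ h m))

end WeightedExp

section Unitary

variable {ι 𝕜 : Type*} [Fintype ι] [DecidableEq ι] [RCLike 𝕜]

lemma sum_norm_sq_apply_of_mem_unitaryGroup {U : Matrix ι ι 𝕜} (hU : U ∈ unitaryGroup ι 𝕜)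
    (j : ι) : ∑ k, ‖U k j‖ ^ 2 = 1 := by
  have := congr_fun₂ ((mem_unitaryGroup_iff' (A := U)).mp hU) j j
  simp only [star_eq_conjTranspose, mul_apply, conjTranspose_apply, one_apply_eq,
    RCLike.star_def, RCLike.conj_mul] at this
  exact_mod_cast this

lemma apply_eq_zero_of_norm_apply_eq_one {U : Matrix ι ι 𝕜} (hU : U ∈ unitaryGroup ι 𝕜)
    {i j : ι} (hij : ‖U i j‖ = 1) {k : ι} (hk : k ≠ i) : U k j = 0 := by
  have hsum := sum_norm_sq_apply_of_mem_unitaryGroup hU j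
  rw [← Finset.add_sum_erase _ _ (Finset.mem_univ i), hij, one_pow, add_eq_left,
    Finset.sum_eq_zero_iff_of_nonneg fun _ _ => sq_nonneg _] at hsum
  simpa using hsum k (by simp [hk])

lemma norm_mul_apply_of_norm_apply_eq_one (V : Matrix ι ι 𝕜) {U : Matrix ι ι 𝕜}
    (hU : U ∈ unitaryGroup ι 𝕜) {i j : ι} (hij : ‖U i j‖ = 1) :
    ‖(V * U) i j‖ = ‖V i i‖ := by
  rw [mul_apply, Finset.sum_eq_single i
    (fun k _ hk => by rw [apply_eq_zero_of_norm_apply_eq_one hU hij hk, mul_zero])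
    (by simp), norm_mul, hij, mul_one]

end Unitary

section Conjugation

variable {ι α : Type*} [Fintype ι] [DecidableEq ι]

lemma transpose_mul_diagonal_mul_apply [CommSemiring α] (P : Matrix ι ι α) (d : ι → α)
    (a b : ι) : (Pᵀ * diagonal d * P) a b = ∑ j, P j a * d j * P j b := by
  simp [mul_apply, diagonal_apply]

lemma transpose_mul_diagonal_mul_apply_self [CommSemiring α] (P : Matrix ι ι α) (d : ι → α)
    (a : ι) : (Pᵀ * diagonal d * P) a a = ∑ j, P j a ^ 2 * d j := by
  rw [transpose_mul_diagonal_mul_apply]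
  exact Finset.sum_congr rfl fun j _ => by ring

lemma transpose_mul_diagonal_mul_sq [CommRing α] {P : Matrix ι ι α} (hP : Pᵀ * P = 1)
    (d : ι → α) :
    (Pᵀ * diagonal d * P) * (Pᵀ * diagonal d * P) = Pᵀ * diagonal (d ^ 2) * P := by
  have hP' : P * Pᵀ = 1 := mul_eq_one_comm.mp hP
  calc (Pᵀ * diagonal d * P) * (Pᵀ * diagonal d * P)
      = Pᵀ * diagonal d * (P * Pᵀ) * diagonal d * P := by noncomm_ring
    _ = Pᵀ * diagonal (d ^ 2) * P := by
      rw [hP', Matrix.mul_one, Matrix.mul_assoc Pᵀ (diagonal d), diagonal_mul_diagonal, sq]; rfl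

lemma sum_sq_apply_of_transpose_mul_self_eq_one [CommSemiring α] {P : Matrix ι ι α}
    (hP : Pᵀ * P = 1) (a : ι) : ∑ j, P j a ^ 2 = 1 := by
  simpa [mul_apply, sq] using congr_fun₂ hP a a

end Conjugation

section TimeEvolution

variable {n : ℕ}

lemma timeEvo_add (H : Matrix (Fin n) (Fin n) ℝ) (s t : ℝ) :
    timeEvo H (s + t) = timeEvo H s * timeEvo H t := by
  rw [timeEvo, timeEvo, timeEvo, ← Matrix.exp_add_of_commute, ofReal_add, add_smul, smul_add]
  exact ((Commute.refl _).smul_left _).smul_right _ |>.smul_left _ |>.smul_right _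

lemma timeEvo_mem_unitaryGroup {H : Matrix (Fin n) (Fin n) ℝ} (hH : H.IsSymm) (t : ℝ) :
    timeEvo H t ∈ unitaryGroup (Fin n) ℂ := by
  set X := I • (t : ℂ) • H.map (fun x => (x : ℂ))
  have hX : Xᴴ = -X := by
    ext i j
    simp [X, hH.apply i j]
  rw [mem_unitaryGroup_iff', timeEvo, star_eq_conjTranspose, ← Matrix.exp_conjTranspose, hX,
    ← Matrix.exp_add_of_commute _ _ (Commute.refl X).neg_left, neg_add_cancel,
    NormedSpace.exp_zero]

lemma timeEvo_eq_of_eq_conj {H Q : Matrix (Fin n) (Fin n) ℝ} {μ : Fin n → ℝ}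
    (hQ : Qᵀ * Q = 1) (hHQ : H = Qᵀ * diagonal μ * Q) (t : ℝ) :
    timeEvo H t
      = (Q.map ofRealHom)ᵀ * diagonal (fun j => exp (t * μ j * I)) * Q.map ofRealHom := by
  set R := Q.map ofRealHom
  have hR : Rᵀ * R = 1 := by
    have := congrArg (·.map ofRealHom) hQ
    rwa [Matrix.map_mul, Matrix.map_one _ (map_zero _) (map_one _), transpose_map] at this
  have hRinv : R⁻¹ = Rᵀ := inv_eq_left_inv hR
  have hRunit : IsUnit R := (isUnit_iff_isUnit_det R).mpr (isUnit_det_of_left_inverse hR)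
  have hgen : I • (t : ℂ) • H.map (fun x => (x : ℂ))
      = R⁻¹ * diagonal (fun j => t * μ j * I) * R := by
    ext a b
    simp only [hRinv, hHQ, Matrix.smul_apply, map_apply, transpose_mul_diagonal_mul_apply, R,
      smul_eq_mul, Finset.mul_sum, ofRealHom_eq_coe, ofReal_sum, ofReal_mul]
    exact Finset.sum_congr rfl fun j _ => by ring
  rw [timeEvo, hgen, Matrix.exp_conj' R _ hRunit, hRinv, Matrix.exp_diagonal, Pi.exp_def]
  simp_rw [← Complex.exp_eq_exp_ℂ]

lemma timeEvo_apply_self_of_eq_conj {H Q : Matrix (Fin n) (Fin n) ℝ} {μ : Fin n → ℝ}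
    (hQ : Qᵀ * Q = 1) (hHQ : H = Qᵀ * diagonal μ * Q) (t : ℝ) (a : Fin n) :
    timeEvo H t a a = ∑ j, ((Q j a ^ 2 : ℝ) : ℂ) * exp (t * μ j * I) := by
  rw [timeEvo_eq_of_eq_conj hQ hHQ, transpose_mul_diagonal_mul_apply_self]
  push_cast
  rfl

end TimeEvolution

/-- Corollary (`s`-free timing-error bound): if there is perfect state transfer from
vertex 1 to vertex 2 at time `t₀` and `|h| (λₙ - λ₁) < π`, then
`p(t₀+h) ≥ 1 - h² ((H²)₁₁ - (H₁₁)²)`. -/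
theorem stmt2 {n : ℕ} (hn : 2 ≤ n) (H : Matrix (Fin n) (Fin n) ℝ) (hH : H.IsSymm)
    (μ : Fin n → ℝ)
    (Q : Matrix (Fin n) (Fin n) ℝ) (hQ : Qᵀ * Q = 1)
    (hHQ : H = Qᵀ * Matrix.diagonal μ * Q)
    (t₀ : ℝ)
    (hPST : ‖timeEvo H t₀ ⟨0, by omega⟩ ⟨1, by omega⟩‖ = 1)
    (h : ℝ) :
    1 - h ^ 2 * ((H * H) ⟨0, by omega⟩ ⟨0, by omega⟩ - (H ⟨0, by omega⟩ ⟨0, by omega⟩) ^ 2)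
      ≤ ‖timeEvo H (t₀ + h) ⟨0, by omega⟩ ⟨1, by omega⟩‖ ^ 2 := by
  set a : Fin n := ⟨0, by omega⟩
  have hmean : H a a = ∑ j, Q j a ^ 2 * μ j := by
    rw [hHQ, transpose_mul_diagonal_mul_apply_self]
  have hsecond : (H * H) a a = ∑ j, Q j a ^ 2 * μ j ^ 2 := by
    rw [hHQ, transpose_mul_diagonal_mul_sq hQ, transpose_mul_diagonal_mul_apply_self]
    rfl
  rw [add_comm, timeEvo_add, norm_mul_apply_of_norm_apply_eq_one _
      (timeEvo_mem_unitaryGroup hH t₀) hPST, timeEvo_apply_self_of_eq_conj hQ hHQ, hmean, hsecond]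
  exact one_sub_sq_mul_variance_le_norm_sq (fun j => sq_nonneg _)
    (sum_sq_apply_of_transpose_mul_self_eq_one hQ a) μ h
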